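/- arXiv:quant-ph/0104137 — 6 statements merged into one kernel-verified Lean document; each statement's English description precedes it below -/
import Mathlib

section
/- For every permutation-symmetric n×n unitary matrix D (with diagonal entries a and off-diagonal entries b), the diagonal entry satisfies 1 - 2/n ≤ |a| ≤ 1. -/
/-!
`D = (a - b) • 1 + b • J` with `J` the all-ones matrix, so the all-ones vector is an eigenvector
with eigenvalue `a - b + n b` and every `eᵢ - eⱼ` is one with eigenvalue `a - b`. Eigenvalues of a
unitary matrix have modulus one, hence `n ‖b‖ = ‖(a - b + n b) - (a - b)‖ ≤ 2`, and
`‖a‖ ≥ ‖a - b‖ - ‖b‖ ≥ 1 - 2 / n`. The upper bound holds for any entry of a unitary matrix.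
-/

open Matrix
open scoped ComplexOrder

namespace Matrix

variable {𝕜 ι : Type*} [RCLike 𝕜] [Fintype ι] [DecidableEq ι]

theorem norm_eq_one_of_mulVec_eq_smul {U : Matrix ι ι 𝕜} (hU : Uᴴ * U = 1) {v : ι → 𝕜}
    (hv : v ≠ 0) {μ : 𝕜} (h : U *ᵥ v = μ • v) : ‖μ‖ = 1 := by
  have key : star v ⬝ᵥ v = (star μ * μ) * (star v ⬝ᵥ v) := calc
    star v ⬝ᵥ v = star v ⬝ᵥ ((Uᴴ * U) *ᵥ v) := by rw [hU, one_mulVec]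
    _ = star (U *ᵥ v) ⬝ᵥ (U *ᵥ v) := by rw [← mulVec_mulVec, dotProduct_mulVec, star_mulVec]
    _ = (star μ * μ) * (star v ⬝ᵥ v) := by
      rw [h, star_smul, smul_dotProduct, dotProduct_smul, smul_eq_mul, smul_eq_mul, mul_assoc]
  have hμ : star μ * μ = 1 :=
    (mul_eq_right₀ (dotProduct_star_self_eq_zero.not.mpr hv)).mp key.symm
  rw [RCLike.star_def, RCLike.conj_mul] at hμ
  have : ‖μ‖ ^ 2 = 1 := by exact_mod_cast hμ
  exact (pow_eq_one_iff_of_nonneg (norm_nonneg μ) two_ne_zero).mp this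

section DiagOffDiag

variable {R : Type*} [CommRing R]

def diagOffDiag (a b : R) : Matrix ι ι R :=
  of fun i j => if i = j then a else b

theorem diagOffDiag_mulVec (a b : R) (v : ι → R) :
    diagOffDiag a b *ᵥ v = fun i => (a - b) * v i + b * ∑ j, v j := by
  ext i
  have hentry : ∀ j, (if i = j then a else b) * v j
      = (a - b) * (if i = j then v j else 0) + b * v j := fun j => by
    split_ifs <;> ring
  simp only [diagOffDiag, mulVec, dotProduct, of_apply, hentry, Finset.sum_add_distrib,
    ← Finset.mul_sum, Finset.sum_ite_eq, Finset.mem_univ, if_true]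

theorem diagOffDiag_mulVec_one (a b : R) :
    diagOffDiag a b *ᵥ (1 : ι → R) = (a - b + b * Fintype.card ι) • (1 : ι → R) := by
  ext i
  simp [diagOffDiag_mulVec]

theorem diagOffDiag_mulVec_single_sub_single (a b : R) (i j : ι) :
    diagOffDiag a b *ᵥ (Pi.single i 1 - Pi.single j 1)
      = (a - b) • (Pi.single i 1 - Pi.single j 1) := by
  ext k
  simp [diagOffDiag_mulVec, Finset.sum_sub_distrib]

end DiagOffDiag

section UnitaryDiagOffDiag

variable [Nontrivial ι] {a b : 𝕜}

theorem norm_sub_eq_one_of_diagOffDiag_unitary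
    (hU : (diagOffDiag a b : Matrix ι ι 𝕜)ᴴ * diagOffDiag a b = 1) : ‖a - b‖ = 1 := by
  obtain ⟨i, j, hij⟩ := exists_pair_ne ι
  refine norm_eq_one_of_mulVec_eq_smul hU ?_ (diagOffDiag_mulVec_single_sub_single a b i j)
  intro h
  simpa [hij] using congrFun h i

theorem card_mul_norm_le_two_of_diagOffDiag_unitary
    (hU : (diagOffDiag a b : Matrix ι ι 𝕜)ᴴ * diagOffDiag a b = 1) :
    Fintype.card ι * ‖b‖ ≤ 2 := by
  have hsum : ‖a - b + b * Fintype.card ι‖ = 1 :=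
    norm_eq_one_of_mulVec_eq_smul hU one_ne_zero (diagOffDiag_mulVec_one a b)
  calc (Fintype.card ι : ℝ) * ‖b‖ = ‖(a - b + b * Fintype.card ι) - (a - b)‖ := by
        rw [add_sub_cancel_left, norm_mul, RCLike.norm_natCast, mul_comm]
    _ ≤ ‖a - b + b * Fintype.card ι‖ + ‖a - b‖ := norm_sub_le _ _
    _ = 2 := by rw [hsum, norm_sub_eq_one_of_diagOffDiag_unitary hU]; norm_num

theorem one_sub_two_div_card_le_norm_of_diagOffDiag_unitary
    (hU : (diagOffDiag a b : Matrix ι ι 𝕜)ᴴ * diagOffDiag a b = 1) :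
    1 - 2 / (Fintype.card ι : ℝ) ≤ ‖a‖ := by
  have hb : ‖b‖ ≤ 2 / Fintype.card ι := by
    rw [le_div_iff₀ (by exact_mod_cast Fintype.card_pos), mul_comm]
    exact card_mul_norm_le_two_of_diagOffDiag_unitary hU
  have := norm_sub_le a b
  rw [norm_sub_eq_one_of_diagOffDiag_unitary hU] at this
  linarith

end UnitaryDiagOffDiag

end Matrix

/-- For every permutation-symmetric `n × n` unitary matrix `D` (constant diagonal `a`,
constant off-diagonal `b`, `n ≥ 2`), the diagonal entry satisfies `1 - 2/n ≤ |a| ≤ 1`. -/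
theorem symmetric_unitary_diag_bound (n : ℕ) (hn : 2 ≤ n) (a b : ℂ)
    (D : Matrix (Fin n) (Fin n) ℂ)
    (hD : ∀ i j, D i j = if i = j then a else b)
    (hU : D.conjTranspose * D = 1) :
    1 - 2 / (n : ℝ) ≤ ‖a‖ ∧ ‖a‖ ≤ 1 := by
  obtain rfl : D = diagOffDiag a b := ext hD
  have : Nontrivial (Fin n) := Fin.nontrivial_iff_two_le.mpr hn
  refine ⟨?_, ?_⟩
  · simpa using one_sub_two_div_card_le_norm_of_diagOffDiag_unitary hU
  · have h00 :=
      entry_norm_bound_of_unitary (mem_unitaryGroup_iff'.mpr hU) ⟨0, by omega⟩ ⟨0, by omega⟩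
    simpa [diagOffDiag] using h00
end

section
/- The matrix U_k = S_k D, where D is Grover's diffusion operator on n states and S_k is the diagonal matrix with entries (-1)^{k_i} for a 0-1 vector k of Hamming weight k (with 0 < k < n), has eigenvalue 1 with multiplicity at least k - 1 and eigenvalue -1 with multiplicity at least n - k - 1. -/
open Matrix Finset

lemma eigen_aux (n : ℕ) (kv : Fin n → Bool) (b : Bool) (μ : ℝ)
    (hμ : μ = if b then 1 else -1)
    (D S : Matrix (Fin n) (Fin n) ℝ)
    (hD : ∀ i j, D i j = 2 / n - if i = j then 1 else 0)
    (hS : S = Matrix.diagonal fun i => if kv i then (-1 : ℝ) else 1)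
    (v : Fin n → ℝ) (hsum : ∑ j, v j = 0) (hsupp : ∀ i, kv i ≠ b → v i = 0) :
    (S * D).mulVec v = μ • v := by
  have hDv : D.mulVec v = fun i => -(v i) := by
    funext i
    simp only [Matrix.mulVec, dotProduct]
    have : ∀ j, D i j * v j = (2 / n) * v j - (if i = j then 1 else 0) * v j := by
      intro j; rw [hD]; ring
    rw [Finset.sum_congr rfl fun j _ => this j, Finset.sum_sub_distrib,
      ← Finset.mul_sum, hsum, mul_zero]
    simp [Finset.sum_ite_eq, eq_comm]
  rw [← Matrix.mulVec_mulVec, hDv, hS]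
  funext i
  rw [Matrix.mulVec_diagonal]
  by_cases h : kv i = b
  · cases b
    · simp [h, hμ]
    · simp [h, hμ]
  · simp [hsupp i h]

lemma rank_aux (n : ℕ) (kv : Fin n → Bool) (b : Bool) (μ : ℝ)
    (hμ : μ = if b then 1 else -1)
    (D S : Matrix (Fin n) (Fin n) ℝ)
    (hD : ∀ i j, D i j = 2 / n - if i = j then 1 else 0)
    (hS : S = Matrix.diagonal fun i => if kv i then (-1 : ℝ) else 1)
    (hne : (Finset.univ.filter fun i => kv i = b).Nonempty) :
    (Finset.univ.filter fun i => kv i = b).card - 1 ≤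
      Module.finrank ℝ (Module.End.eigenspace (Matrix.toLin' (S * D)) μ) := by
  obtain ⟨i0, hi0⟩ := hne
  have hi0b : kv i0 = b := by simpa using hi0
  set E := Module.End.eigenspace (Matrix.toLin' (S * D)) μ with hE
  let ι := {i : Fin n // kv i = b ∧ i ≠ i0}
  let w : ι → (Fin n → ℝ) := fun i => Pi.single i.1 1 - Pi.single i0 1
  have hw : ∀ i : ι, w i ∈ E := by
    intro i
    rw [hE, Module.End.mem_eigenspace_iff, Matrix.toLin'_apply]
    apply eigen_aux n kv b μ hμ D S hD hS
    · simp [w, Finset.sum_sub_distrib]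
    · intro j hj
      have h1 : j ≠ i.1 := fun h => hj (h ▸ i.2.1)
      have h2 : j ≠ i0 := fun h => hj (h ▸ hi0b)
      simp [w, Pi.single_eq_of_ne h1, Pi.single_eq_of_ne h2]
  let w' : ι → E := fun i => ⟨w i, hw i⟩
  have hli : LinearIndependent ℝ w' := by
    have hliw : LinearIndependent ℝ w := by
      rw [Fintype.linearIndependent_iff]
      intro g hg j
      have := congrFun hg j.1
      simp only [Finset.sum_apply, Pi.smul_apply, Pi.sub_apply, smul_eq_mul, w,
        Pi.zero_apply] at this
      have hz : ∀ i : ι, g i * ((Pi.single i.1 1 : Fin n → ℝ) j.1 - (Pi.single i0 1 : Fin n → ℝ) j.1)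
          = if i = j then g j else 0 := by
        intro i
        have hji0 : (j:Fin n) ≠ i0 := j.2.2
        by_cases h : i = j
        · subst h; simp [Pi.single_apply, hji0]
        · have hne : (j:Fin n) ≠ (i:Fin n) := fun hh => h (Subtype.ext hh.symm)
          simp [Pi.single_apply, hne, h, hji0]
      rw [Finset.sum_congr rfl fun i _ => hz i, Finset.sum_ite_eq' Finset.univ j] at this
      simpa using this
    exact hliw.of_comp E.subtype
  have hcard := hli.fintype_card_le_finrank
  have : Fintype.card ι = (Finset.univ.filter fun i => kv i = b).card - 1 := by
    rw [Fintype.card_subtype]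
    have : (Finset.univ.filter fun i => kv i = b ∧ i ≠ i0) =
        (Finset.univ.filter fun i => kv i = b).erase i0 := by
      ext i
      simp [Finset.mem_erase, and_comm]
    rw [this, Finset.card_erase_of_mem hi0]
  omega

/-- The matrix `U = S_k * D` (Grover operator `D`, sign-flip matrix `S_k` determined by a
0-1 vector of Hamming weight `k`, with `0 < k < n`) has eigenvalue `1` with multiplicity
at least `k - 1` and eigenvalue `-1` with multiplicity at least `n - k - 1`. -/
theorem grover_walk_trivial_eigenvalues (n : ℕ) (hn : 2 ≤ n)
    (kv : Fin n → Bool) (k : ℕ)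
    (hk : k = (Finset.univ.filter fun i => kv i = true).card)
    (hk0 : 0 < k) (hk1 : k < n)
    (D S : Matrix (Fin n) (Fin n) ℝ)
    (hD : ∀ i j, D i j = 2 / n - if i = j then 1 else 0)
    (hS : S = Matrix.diagonal fun i => if kv i then (-1 : ℝ) else 1) :
    k - 1 ≤ Module.finrank ℝ (Module.End.eigenspace (Matrix.toLin' (S * D)) 1) ∧
      n - k - 1 ≤ Module.finrank ℝ (Module.End.eigenspace (Matrix.toLin' (S * D)) (-1)) := by
  have hsplit : (Finset.univ.filter fun i => kv i = true).card +
      (Finset.univ.filter fun i => kv i = false).card = n := by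
    have h := Finset.card_filter_add_card_filter_not
      (s := (Finset.univ : Finset (Fin n))) (p := fun i => kv i = true)
    simp only [Bool.not_eq_true, Finset.card_univ, Fintype.card_fin] at h
    exact h
  have hf : (Finset.univ.filter fun i => kv i = false).card = n - k := by omega
  constructor
  · have h1 := rank_aux n kv true 1 (by simp) D S hD hS
      (Finset.card_pos.mp (by omega))
    rwa [← hk] at h1
  · have h2 := rank_aux n kv false (-1) (by simp) D S hD hS
      (Finset.card_pos.mp (by omega))
    rwa [hf] at h2
end

section
/- The vector v = (1/√2)·(−i/√(n−k) repeated in the first n−k coordinates, 1/√k repeated in the last k coordinates) is a unit eigenvector of the block matrix U_k = S_k D (S_k negating the last k coordinates, D the Grover operator) with eigenvalue λ = 1 - 2k/n + (2i/n)√(k(n-k)). -/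
/-!
Since `D = (2/n) J - 1`, we have `D v = (2/n) (∑ v) - v`, so on vectors that are constant on the
two blocks `U_k` acts as a `2 × 2` matrix and the eigenvector equation becomes two scalar
identities. Writing `x = √(n-k)` and `y = √k`, so that `n = x² + y²`, the eigenvalue is
`(x + i y)² / n`.
-/

open Finset Matrix Complex

theorem Fin.sum_ite_val_lt {M : Type*} [AddCommMonoid M] {n m : ℕ} (hm : m ≤ n) (a b : M) :
    ∑ j : Fin n, (if (j : ℕ) < m then a else b) = m • a + (n - m) • b := by
  rw [Finset.sum_ite, Finset.sum_const, Finset.sum_const, filter_not,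
    card_sdiff_of_subset (filter_subset _ _), Fin.card_filter_val_lt, card_univ, Fintype.card_fin,
    min_eq_right hm]

section SignedGrover

variable {R : Type*} [CommRing R] {c : R}

theorem Matrix.mulVec_apply_of_eq_const_sub_one {ι : Type*} [Fintype ι] [DecidableEq ι]
    {D : Matrix ι ι R} (hD : ∀ i j, D i j = c - if i = j then 1 else 0) (v : ι → R) (i : ι) :
    (D *ᵥ v) i = c * ∑ j, v j - v i := by
  simp only [mulVec, dotProduct, hD, sub_mul, ite_mul, one_mul, zero_mul, sum_sub_distrib,
    ← mul_sum, sum_ite_eq, mem_univ, if_true]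

variable {n k : ℕ} {D S : Matrix (Fin n) (Fin n) R}

theorem Matrix.mulVec_two_block_eq_smul (hk : k ≤ n)
    (hD : ∀ i j, D i j = c - if i = j then 1 else 0)
    (hS : S = diagonal fun i : Fin n => if (i : ℕ) < n - k then 1 else -1) {a b μ : R}
    (ha : c * ((n - k : ℕ) * a + k * b) - a = μ * a)
    (hb : b - c * ((n - k : ℕ) * a + k * b) = μ * b) :
    (S * D) *ᵥ (fun i : Fin n => if (i : ℕ) < n - k then a else b) =
      μ • fun i : Fin n => if (i : ℕ) < n - k then a else b := by
  rw [← mulVec_mulVec, hS]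
  funext i
  rw [mulVec_diagonal, mulVec_apply_of_eq_const_sub_one hD, Fin.sum_ite_val_lt (Nat.sub_le n k),
    Nat.sub_sub_self hk, nsmul_eq_mul, nsmul_eq_mul, Pi.smul_apply, smul_eq_mul]
  split_ifs
  · linear_combination ha
  · linear_combination hb

end SignedGrover

section TwoBlockEigenvector

variable {n k : ℕ} {x y : ℂ}

theorem grover_two_block_eigenvector (hk0 : 0 < k) (hk1 : k < n) {D S : Matrix (Fin n) (Fin n) ℂ}
    (hD : ∀ i j, D i j = 2 / n - if i = j then 1 else 0)
    (hS : S = diagonal fun i : Fin n => if (i : ℕ) < n - k then 1 else -1)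
    (hx : x ^ 2 = (n - k : ℕ)) (hy : y ^ 2 = k) :
    (S * D) *ᵥ (fun i : Fin n => if (i : ℕ) < n - k then -I / x else 1 / y) =
      ((x + I * y) ^ 2 / n) • fun i : Fin n => if (i : ℕ) < n - k then -I / x else 1 / y := by
  have hx0 : x ≠ 0 := by
    rintro rfl; rw [zero_pow two_ne_zero, eq_comm, Nat.cast_eq_zero] at hx; omega
  have hy0 : y ≠ 0 := by
    rintro rfl; rw [zero_pow two_ne_zero, eq_comm, Nat.cast_eq_zero] at hy; omega
  have hn : (n : ℂ) = x ^ 2 + y ^ 2 := by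
    rw [hx, hy, ← Nat.cast_add, Nat.sub_add_cancel hk1.le]
  have hn0 : x ^ 2 + y ^ 2 ≠ 0 := by
    rw [← hn, Nat.cast_ne_zero]; omega
  apply mulVec_two_block_eq_smul hk1.le hD hS <;> rw [← hx, ← hy, hn] <;> field_simp
  · linear_combination (2 * x * y + I * y ^ 2) * I_sq
  · linear_combination -y ^ 2 * I_sq

theorem sum_norm_sq_two_block (hk0 : 0 < k) (hk1 : k < n) (hx : x ^ 2 = (n - k : ℕ))
    (hy : y ^ 2 = k) :
    ∑ i : Fin n, ‖if (i : ℕ) < n - k then -I / x else 1 / y‖ ^ 2 = 2 := by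
  have hx' : ‖x‖ ^ 2 = (n - k : ℕ) := by rw [← norm_pow, hx, norm_natCast]
  have hy' : ‖y‖ ^ 2 = k := by rw [← norm_pow, hy, norm_natCast]
  simp only [apply_ite (fun z : ℂ => ‖z‖ ^ 2), norm_div, norm_neg, norm_I, norm_one, div_pow,
    hx', hy']
  rw [Fin.sum_ite_val_lt (Nat.sub_le n k), Nat.sub_sub_self hk1.le, nsmul_eq_mul, nsmul_eq_mul]
  have : ((n - k : ℕ) : ℝ) ≠ 0 := Nat.cast_ne_zero.2 (by omega)
  have : (k : ℝ) ≠ 0 := Nat.cast_ne_zero.2 (by omega)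
  field_simp
  norm_num

end TwoBlockEigenvector

theorem nontrivial_eigenvector_general (n k : ℕ) (hk0 : 0 < k) (hk1 : k < n)
    (D S : Matrix (Fin n) (Fin n) ℂ)
    (hD : ∀ i j, D i j = 2 / n - if i = j then 1 else 0)
    (hS : S = Matrix.diagonal fun i : Fin n => if (i : ℕ) < n - k then (1 : ℂ) else -1)
    (v : Fin n → ℂ)
    (hv : ∀ i, v i = (1 / Real.sqrt 2 : ℝ) *
      (if (i : ℕ) < n - k then -Complex.I / (Real.sqrt (n - k) : ℝ)
        else 1 / (Real.sqrt k : ℝ))) :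
    (S * D).mulVec v =
        (1 - 2 * (k : ℂ) / n + (2 * Complex.I / n) * (Real.sqrt (k * (n - k)) : ℝ)) • v ∧
      ∑ i, ‖v i‖ ^ 2 = 1 := by
  set x : ℂ := ((√(n - k) : ℝ) : ℂ)
  set y : ℂ := ((√k : ℝ) : ℂ)
  have hx : x ^ 2 = (n - k : ℕ) := by
    rw [← ofReal_pow, Real.sq_sqrt (sub_nonneg.2 (Nat.cast_le.2 hk1.le)), Nat.cast_sub hk1.le,
      ofReal_sub, ofReal_natCast, ofReal_natCast]
  have hy : y ^ 2 = k := by rw [← ofReal_pow, Real.sq_sqrt (Nat.cast_nonneg k), ofReal_natCast]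
  have hvw : v = ((1 / √2 : ℝ) : ℂ) • fun i : Fin n => if (i : ℕ) < n - k then -I / x else 1 / y :=
    funext hv
  have hμ : 1 - 2 * (k : ℂ) / n + (2 * I / n) * (√(k * (n - k)) : ℝ) = (x + I * y) ^ 2 / n := by
    have hn : (n : ℂ) ≠ 0 := Nat.cast_ne_zero.2 (by omega)
    rw [Nat.cast_sub hk1.le] at hx
    rw [Real.sqrt_mul (Nat.cast_nonneg k), ofReal_mul]
    field_simp
    linear_combination hy - hx - y ^ 2 * I_sq
  constructor
  · rw [hvw, mulVec_smul, grover_two_block_eigenvector hk0 hk1 hD hS hx hy, smul_comm, hμ]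
  · simp only [hvw, Pi.smul_apply, smul_eq_mul, norm_mul, mul_pow, ← mul_sum,
      sum_norm_sq_two_block hk0 hk1 hx hy, norm_real, Real.norm_eq_abs, sq_abs, div_pow,
      Real.sq_sqrt zero_le_two]
    norm_num

/-- The vector `v` with value `-i/√(2(n-k))` on the first `n-k` coordinates and
`1/√(2k)` on the last `k` coordinates is a unit eigenvector of `U = S_k * D`
(with `S_k` negating the last `k` coordinates and `D` the Grover operator) with
eigenvalue `λ = 1 - 2k/n + (2i/n)√(k(n-k))`. -/
theorem nontrivial_eigenvector (n k : ℕ) (hn : 2 ≤ n) (hk0 : 0 < k) (hk1 : k < n)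
    (D S : Matrix (Fin n) (Fin n) ℂ)
    (hD : ∀ i j, D i j = 2 / n - if i = j then 1 else 0)
    (hS : S = Matrix.diagonal fun i : Fin n => if (i : ℕ) < n - k then (1 : ℂ) else -1)
    (v : Fin n → ℂ)
    (hv : ∀ i, v i = (1 / Real.sqrt 2 : ℝ) *
      (if (i : ℕ) < n - k then -Complex.I / (Real.sqrt (n - k) : ℝ)
        else 1 / (Real.sqrt k : ℝ))) :
    (S * D).mulVec v =
        (1 - 2 * (k : ℂ) / n + (2 * Complex.I / n) * (Real.sqrt (k * (n - k)) : ℝ)) • v ∧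
      ∑ i, ‖v i‖ ^ 2 = 1 :=
  nontrivial_eigenvector_general n k hk0 hk1 D S hD hS v hv
end

section
/- For the continuous-time quantum walk on the n-cube started at the origin, the wave function at time t satisfies ψ_t(x) = (cos(t/n))^{n-w} · (i sin(t/n))^{w}, where w is the Hamming weight of x. -/
/-!
The normalized adjacency matrix of the `n`-cube is `(1/n) ∑ᵢ Xᵢ`, where the bit flips `Xᵢ` commute
and square to `1`. Hence `exp (i t H) = ∏ᵢ (cos (t/n) + i sin (t/n) Xᵢ)`, and applying these
factors one at a time to `δ₀` builds the product state `⊗ᵢ (cos (t/n) |0⟩ + i sin (t/n) |1⟩)`.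
-/

open Finset
open scoped Matrix

section
variable {A : Type*} [Ring A] [TopologicalSpace A] [IsTopologicalRing A] [T2Space A]
  [Algebra ℂ A] [ContinuousSMul ℂ A]

theorem exp_mul_I_smul_of_sq_eq_one (θ : ℂ) {a : A} (ha : a ^ 2 = 1) :
    NormedSpace.exp ((θ * Complex.I) • a) =
      Complex.cos θ • 1 + (Complex.sin θ * Complex.I) • a := by
  rw [NormedSpace.exp_eq_tsum ℂ]
  refine (HasSum.even_add_odd ?_ ?_).tsum_eq
  · convert (Complex.hasSum_cos θ).smul_const (1 : A) using 2 with k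
    rw [smul_pow, pow_mul a, ha, one_pow, smul_smul, mul_pow, pow_mul Complex.I, Complex.I_sq,
      pow_mul θ]
    ring_nf
  · convert ((Complex.hasSum_sin θ).mul_right Complex.I).smul_const a using 2 with k
    rw [smul_pow, pow_succ a, pow_mul a, ha, one_pow, one_mul, smul_smul, mul_pow,
      pow_succ Complex.I, pow_mul Complex.I, Complex.I_sq]
    ring_nf
end

theorem Finset.sum_boole_eq_singleton {ι R : Type*} [Fintype ι] [DecidableEq ι]
    [AddCommMonoidWithOne R] (s : Finset ι) :
    (∑ i, if s = {i} then (1 : R) else 0) = if #s = 1 then 1 else 0 := by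
  split_ifs with h
  · obtain ⟨a, rfl⟩ := card_eq_one.mp h
    simp
  · exact sum_eq_zero fun i _ => if_neg fun (hi : s = {i}) => h (hi ▸ card_singleton i)

namespace Hypercube
variable {ι : Type*} [DecidableEq ι]

def bitFlip (i : ι) : Equiv.Perm (ι → ZMod 2) := Equiv.addRight (Pi.single i 1)

theorem bitFlip_mul_self (i : ι) : bitFlip i * bitFlip i = 1 := by
  rw [bitFlip, ← Equiv.addRight_add, ← Pi.single_add, CharTwo.add_self_eq_zero, Pi.single_zero,
    Equiv.addRight_zero]

theorem commute_bitFlip (i j : ι) : Commute (bitFlip i) (bitFlip j) := by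
  rw [Commute, SemiconjBy, bitFlip, bitFlip, ← Equiv.addRight_add, ← Equiv.addRight_add, add_comm]

theorem bitFlip_apply_self (i : ι) (x : ι → ZMod 2) : bitFlip i x i = x i + 1 := by
  simp [bitFlip]

theorem bitFlip_apply_of_ne {i j : ι} (h : j ≠ i) (x : ι → ZMod 2) : bitFlip i x j = x j := by
  simp [bitFlip, h]

def stateFactor (a b : ℂ) (S : Finset ι) (i : ι) (c : ZMod 2) : ℂ :=
  if i ∈ S then (if c = 1 then b else a) else (if c = 0 then 1 else 0)

theorem stateFactor_insert_of_ne (a b : ℂ) (S : Finset ι) {i j : ι} (h : i ≠ j) :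
    stateFactor a b (insert j S) i = stateFactor a b S i := by
  funext c
  simp only [stateFactor, mem_insert, h, false_or]

theorem stateFactor_add_stateFactor_add_one (a b : ℂ) {S : Finset ι} {j : ι} (hj : j ∉ S)
    (c : ZMod 2) :
    a * stateFactor a b S j c + b * stateFactor a b S j (c + 1) =
      stateFactor a b (insert j S) j c := by
  rcases (by decide : ∀ c : ZMod 2, c = 0 ∨ c = 1) c with rfl | rfl <;>
    simp [stateFactor, hj, CharTwo.add_self_eq_zero]

variable [Fintype ι]

abbrev flipMatrix (i : ι) : Matrix (ι → ZMod 2) (ι → ZMod 2) ℂ := (bitFlip i).permMatrix ℂ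

theorem add_single_eq_iff (x y : ι → ZMod 2) (i : ι) :
    x + Pi.single i 1 = y ↔ ({j | x j ≠ y j} : Finset ι) = {i} := by
  simp only [funext_iff, Finset.ext_iff, mem_filter, mem_univ, true_and, mem_singleton,
    Pi.add_apply, Pi.single_apply]
  refine forall_congr' fun j => ?_
  split_ifs with hj
  · simpa [hj] using (by decide : ∀ a b : ZMod 2, a + 1 = b ↔ a ≠ b) (x j) (y j)
  · simp [hj]

theorem flipMatrix_sq (i : ι) : flipMatrix i ^ 2 = 1 := by
  rw [sq, ← Matrix.permMatrix_mul, bitFlip_mul_self, Matrix.permMatrix_one]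

theorem commute_flipMatrix (i j : ι) : Commute (flipMatrix i) (flipMatrix j) := by
  rw [Commute, SemiconjBy, ← Matrix.permMatrix_mul, ← Matrix.permMatrix_mul,
    (commute_bitFlip i j).eq]

theorem sum_flipMatrix_apply (x y : ι → ZMod 2) :
    (∑ i, flipMatrix i) x y = if #{i | x i ≠ y i} = 1 then 1 else 0 := by
  simp only [Matrix.sum_apply, flipMatrix, PEquiv.toMatrix_apply, Equiv.toPEquiv_apply,
    Option.mem_def, Option.some.injEq, bitFlip, Equiv.coe_addRight, add_single_eq_iff,
    sum_boole_eq_singleton]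

/-- `⊗_{i ∈ S} (a |0⟩ + b |1⟩) ⊗ ⊗_{i ∉ S} |0⟩`. -/
def productState (a b : ℂ) (S : Finset ι) (x : ι → ZMod 2) : ℂ :=
  ∏ i, stateFactor a b S i (x i)

theorem productState_empty (a b : ℂ) :
    productState a b (∅ : Finset ι) = fun x => if x = 0 then 1 else 0 := by
  funext x
  simp [productState, stateFactor, prod_boole, funext_iff]

theorem productState_univ (a b : ℂ) (x : ι → ZMod 2) :
    productState a b univ x =
      a ^ (Fintype.card ι - #{i | x i = 1}) * b ^ #{i | x i = 1} := by
  have hcard := card_filter_add_card_filter_not (s := univ) fun i => x i = 1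
  rw [card_univ] at hcard
  simp only [productState, stateFactor, mem_univ, if_true, prod_ite, prod_const, ← hcard,
    Nat.add_sub_cancel_left, mul_comm]

theorem mulVec_productState_insert (a b : ℂ) {S : Finset ι} {j : ι} (hj : j ∉ S) :
    (a • 1 + b • flipMatrix j) *ᵥ productState a b S = productState a b (insert j S) := by
  funext x
  have hrest : ∀ y : ι → ZMod 2, (∀ i ≠ j, y i = x i) →
      ∏ i ∈ {j}ᶜ, stateFactor a b S i (y i) = ∏ i ∈ {j}ᶜ, stateFactor a b (insert j S) i (x i) :=
    fun y hy => prod_congr rfl fun i hi => by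
      have hij : i ≠ j := by simpa using hi
      rw [hy i hij, stateFactor_insert_of_ne a b S hij]
  simp only [Matrix.add_mulVec, Matrix.smul_mulVec, Matrix.one_mulVec, Matrix.permMatrix_mulVec,
    Pi.add_apply, Pi.smul_apply, Function.comp_apply, smul_eq_mul, productState,
    Fintype.prod_eq_mul_prod_compl j, hrest x fun _ _ => rfl,
    hrest (bitFlip j x) fun _ h => bitFlip_apply_of_ne h x, bitFlip_apply_self]
  rw [← mul_assoc, ← mul_assoc, ← add_mul, stateFactor_add_stateFactor_add_one a b hj]

theorem exp_smul_sum_flipMatrix_mulVec (θ : ℂ) (S : Finset ι) :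
    NormedSpace.exp ((θ * Complex.I) • ∑ i ∈ S, flipMatrix i) *ᵥ
        (fun x => if x = 0 then 1 else 0) =
      productState (Complex.cos θ) (Complex.sin θ * Complex.I) S := by
  induction S using Finset.induction_on with
  | empty =>
    rw [sum_empty, smul_zero, NormedSpace.exp_zero, Matrix.one_mulVec, productState_empty]
  | insert j S hj ih =>
    have hcomm : Commute ((θ * Complex.I) • flipMatrix j)
        ((θ * Complex.I) • ∑ i ∈ S, flipMatrix i) :=
      ((Commute.sum_right _ _ _ fun i _ => commute_flipMatrix j i).smul_left _).smul_right _
    rw [sum_insert hj, smul_add, Matrix.exp_add_of_commute _ _ hcomm, ← Matrix.mulVec_mulVec, ih,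
      exp_mul_I_smul_of_sq_eq_one _ (flipMatrix_sq j), mulVec_productState_insert _ _ hj]

end Hypercube

open Hypercube in
theorem hypercube_walk_wavefunction_general (n : ℕ) (t : ℝ)
    (H : Matrix (Fin n → ZMod 2) (Fin n → ZMod 2) ℂ)
    (hH : ∀ x y, H x y =
      if (Finset.univ.filter fun i => x i ≠ y i).card = 1 then (1 / n : ℂ) else 0)
    (ψ : (Fin n → ZMod 2) → ℂ)
    (hψ : ψ = (NormedSpace.exp ((Complex.I * t) • H)).mulVec
      (fun y => if y = 0 then 1 else 0)) :
    ∀ x : Fin n → ZMod 2,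
      ψ x = (Real.cos (t / n) : ℂ) ^ (n - (Finset.univ.filter fun i => x i = 1).card) *
        (Complex.I * Real.sin (t / n)) ^ (Finset.univ.filter fun i => x i = 1).card := by
  intro x
  have hH_flip : (Complex.I * t) • H = ((t / n : ℝ) * Complex.I : ℂ) • ∑ i, flipMatrix i := by
    ext y z
    rw [Matrix.smul_apply, Matrix.smul_apply, hH, sum_flipMatrix_apply]
    split_ifs <;> push_cast <;> ring
  rw [hψ, hH_flip, exp_smul_sum_flipMatrix_mulVec, productState_univ, Fintype.card_fin,
    Complex.ofReal_cos, Complex.ofReal_sin, mul_comm Complex.I]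

/-- For the continuous-time quantum walk on the `n`-cube started at the origin,
`ψ_t(x) = cos(t/n)^{n-w} · (i sin(t/n))^w` where `w` is the Hamming weight of `x`. -/
theorem hypercube_walk_wavefunction (n : ℕ) (hn : 1 ≤ n) (t : ℝ)
    (H : Matrix (Fin n → ZMod 2) (Fin n → ZMod 2) ℂ)
    (hH : ∀ x y, H x y =
      if (Finset.univ.filter fun i => x i ≠ y i).card = 1 then (1 / n : ℂ) else 0)
    (ψ : (Fin n → ZMod 2) → ℂ)
    (hψ : ψ = (NormedSpace.exp ((Complex.I * t) • H)).mulVec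
      (fun y => if y = 0 then 1 else 0)) :
    ∀ x : Fin n → ZMod 2,
      ψ x = (Real.cos (t / n) : ℂ) ^ (n - (Finset.univ.filter fun i => x i = 1).card) *
        (Complex.I * Real.sin (t / n)) ^ (Finset.univ.filter fun i => x i = 1).card :=
  hypercube_walk_wavefunction_general n t H hH ψ hψ
end

section
/- For the continuous-time quantum walk on the n-cube started at a vertex, at time t = kπn/4 for any odd natural number k, the probability distribution |ψ_t(x)|² is exactly the uniform distribution 2^{-n} on all 2ⁿ vertices. -/
/-!
The characters `x ↦ (-1)^(s·x)` of `(ZMod 2)ⁿ` diagonalize the adjacency matrix `A` of the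
`n`-cube, with eigenvalue `∑ i, (-1)^(s i)`. Conjugating back by the Walsh–Hadamard matrix, the
entries of `exp (z A)` factor over the coordinates: `exp (z A) x y = ∏ i, (cosh z or sinh z)`
according as `x i = y i` or not, so the walk on the cube is the `n`-th tensor power of the walk
on a single edge. For `z = iθ` with `θ = t / n = kπ/4`, `k` odd, both factors `cos θ` and
`i sin θ` have squared modulus `1/2`, hence every vertex gets probability `2⁻ⁿ`.
-/

open Finset Matrix Complex

namespace HypercubeWalk

abbrev Cube (n : ℕ) := Fin n → ZMod 2

lemma zmod_two_cases (a : ZMod 2) : a = 0 ∨ a = 1 := by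
  revert a; decide

def signChar (a : ZMod 2) : ℂ := if a = 0 then 1 else -1

@[simp] lemma signChar_zero : signChar 0 = 1 := rfl

@[simp] lemma signChar_one : signChar 1 = -1 := rfl

lemma signChar_add (a b : ZMod 2) : signChar (a + b) = signChar a * signChar b := by
  rcases zmod_two_cases a with rfl | rfl <;> rcases zmod_two_cases b with rfl | rfl <;>
    simp [CharTwo.add_self_eq_zero]

lemma sum_ite_eq_singleton {ι R : Type*} [Fintype ι] [DecidableEq ι] [AddCommMonoidWithOne R]
    (s : Finset ι) : (∑ i, if s = {i} then (1 : R) else 0) = if #s = 1 then 1 else 0 := by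
  by_cases hs : #s = 1
  · obtain ⟨a, rfl⟩ := card_eq_one.mp hs
    simp [singleton_inj]
  · rw [if_neg hs]
    refine sum_eq_zero fun i _ => if_neg ?_
    rintro rfl
    exact hs (card_singleton i)

variable {n : ℕ}

lemma sum_prod_cube {R : Type*} [CommSemiring R] (g : Fin n → ZMod 2 → R) :
    ∑ s : Cube n, ∏ i, g i (s i) = ∏ i, (g i 0 + g i 1) := by
  rw [← Fintype.prod_sum]
  exact prod_congr rfl fun i _ => Fin.sum_univ_two (g i)

lemma eq_add_single_iff {x y : Cube n} {i : Fin n} :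
    y = x + Pi.single i 1 ↔ ({j | x j ≠ y j} : Finset (Fin n)) = {i} := by
  simp only [funext_iff, Finset.ext_iff, mem_filter, mem_univ, true_and, mem_singleton,
    Pi.add_apply, Pi.single_apply]
  refine forall_congr' fun j => ?_
  by_cases h : j = i
  · simp only [h, if_true, iff_true]
    generalize x i = a; generalize y i = b
    revert a b; decide
  · simp only [h, if_false, add_zero, iff_false, not_not]
    exact eq_comm

variable (n) in
def walsh : Matrix (Cube n) (Cube n) ℂ := of fun x s => ∏ i, signChar (x i * s i)

lemma walsh_add_left (x y s : Cube n) : walsh n (x + y) s = walsh n x s * walsh n y s := by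
  simp only [walsh, of_apply, Pi.add_apply, add_mul, signChar_add, prod_mul_distrib]

lemma walsh_comm (x s : Cube n) : walsh n x s = walsh n s x := by
  simp only [walsh, of_apply, mul_comm]

lemma walsh_single (i : Fin n) (s : Cube n) : walsh n (Pi.single i 1) s = signChar (s i) := by
  rw [walsh, of_apply, prod_eq_single i (fun j _ hj => by simp [hj]) (by simp)]
  simp

lemma walsh_mul_self : walsh n * walsh n = (2 ^ n : ℂ) • 1 := by
  ext x y
  have hfactor (a : ZMod 2) : signChar (a * 0) + signChar (a * 1) = if a = 0 then 2 else 0 := by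
    rcases zmod_two_cases a with rfl | rfl <;> norm_num
  rw [mul_apply, Matrix.smul_apply, one_apply, smul_eq_mul, mul_ite, mul_one, mul_zero]
  simp_rw [walsh_comm _ y, ← walsh_add_left]
  simp only [walsh, of_apply]
  rw [sum_prod_cube (fun i b => signChar ((x + y) i * b))]
  simp only [hfactor, prod_ite_zero, prod_const, card_univ, Fintype.card_fin, mem_univ,
    forall_const, Pi.add_apply, add_eq_zero_iff_eq_neg, CharTwo.neg_eq]
  exact if_congr funext_iff.symm rfl rfl

lemma walsh_mul_inv_smul_walsh : walsh n * ((2 ^ n : ℂ)⁻¹ • walsh n) = 1 := by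
  rw [Matrix.mul_smul, walsh_mul_self, smul_smul, inv_mul_cancel₀ (pow_ne_zero _ two_ne_zero),
    one_smul]

lemma isUnit_det_walsh : IsUnit (walsh n).det :=
  isUnit_det_of_right_inverse walsh_mul_inv_smul_walsh

lemma walsh_inv : (walsh n)⁻¹ = (2 ^ n : ℂ)⁻¹ • walsh n :=
  inv_eq_right_inv walsh_mul_inv_smul_walsh

variable (n) in
def coordFlip (i : Fin n) : Matrix (Cube n) (Cube n) ℂ :=
  of fun x y => if y = x + Pi.single i 1 then 1 else 0

variable (n) in
def adjacency : Matrix (Cube n) (Cube n) ℂ :=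
  of fun x y => if hammingDist x y = 1 then 1 else 0

lemma adjacency_eq_sum_coordFlip : adjacency n = ∑ i, coordFlip n i := by
  ext x y
  simp only [adjacency, coordFlip, of_apply, Matrix.sum_apply, eq_add_single_iff]
  exact (sum_ite_eq_singleton _).symm

lemma coordFlip_mul_walsh (i : Fin n) :
    coordFlip n i * walsh n = walsh n * diagonal fun s => signChar (s i) := by
  ext x s
  rw [mul_diagonal]
  simp only [mul_apply, coordFlip, of_apply, ite_mul, one_mul, zero_mul, sum_ite_eq', mem_univ,
    if_true, walsh_add_left, walsh_single]

lemma adjacency_mul_walsh :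
    adjacency n * walsh n = walsh n * diagonal fun s => ∑ i, signChar (s i) := by
  ext x s
  simp only [adjacency_eq_sum_coordFlip, sum_mul, coordFlip_mul_walsh, Matrix.sum_apply,
    mul_diagonal, mul_sum]

lemma exp_smul_adjacency (z : ℂ) :
    NormedSpace.exp (z • adjacency n) =
      walsh n * diagonal (fun s => cexp (z * ∑ i, signChar (s i))) * (walsh n)⁻¹ := by
  rw [← mul_nonsing_inv_cancel_right (walsh n) (adjacency n) isUnit_det_walsh,
    adjacency_mul_walsh, ← Matrix.smul_mul, ← Matrix.mul_smul, ← diagonal_smul,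
    Matrix.exp_conj _ _ ((isUnit_iff_isUnit_det _).mpr isUnit_det_walsh),
    Matrix.exp_diagonal]
  congr
  ext s
  rw [Pi.coe_exp, Pi.smul_apply, smul_eq_mul, Complex.exp_eq_exp_ℂ]

theorem exp_smul_adjacency_apply (z : ℂ) (x y : Cube n) :
    NormedSpace.exp (z • adjacency n) x y = ∏ i, if x i = y i then cosh z else sinh z := by
  have hfactor (a : ZMod 2) :
      signChar (a * 0) * cexp (z * signChar 0) + signChar (a * 1) * cexp (z * signChar 1) =
        2 * if a = 0 then cosh z else sinh z := by
    rcases zmod_two_cases a with rfl | rfl <;> simp [two_cosh, two_sinh, sub_eq_add_neg]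
  have hterm (s : Cube n) : walsh n x s * cexp (z * ∑ i, signChar (s i)) * walsh n s y =
      ∏ i, signChar ((x i + y i) * s i) * cexp (z * signChar (s i)) := by
    rw [mul_right_comm, walsh_comm s, ← walsh_add_left, mul_sum, Complex.exp_sum, walsh,
      of_apply, prod_mul_distrib]
    rfl
  rw [exp_smul_adjacency, walsh_inv, Matrix.mul_smul, Matrix.smul_apply, mul_apply]
  simp only [mul_diagonal, hterm]
  rw [sum_prod_cube (fun i b => signChar ((x i + y i) * b) * cexp (z * signChar b))]
  simp only [hfactor, prod_mul_distrib, prod_const, card_univ, Fintype.card_fin, smul_eq_mul]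
  rw [inv_mul_cancel_left₀ (pow_ne_zero _ two_ne_zero)]
  simp only [add_eq_zero_iff_eq_neg, CharTwo.neg_eq]

lemma cos_sq_odd_mul_pi_div_four {k : ℕ} (hk : Odd k) :
    Real.cos (k * Real.pi / 4) ^ 2 = 1 / 2 := by
  obtain ⟨m, rfl⟩ := hk
  have hzero : Real.cos (2 * ((2 * m + 1 : ℕ) * Real.pi / 4)) = 0 :=
    Real.cos_eq_zero_iff.mpr ⟨m, by push_cast; ring⟩
  rw [Real.cos_sq, hzero]
  norm_num

lemma sin_sq_odd_mul_pi_div_four {k : ℕ} (hk : Odd k) :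
    Real.sin (k * Real.pi / 4) ^ 2 = 1 / 2 := by
  rw [Real.sin_sq, cos_sq_odd_mul_pi_div_four hk]
  norm_num

end HypercubeWalk

open HypercubeWalk in
/-- For the continuous-time quantum walk on the `n`-cube started at a vertex, at time
`t = k π n / 4` for any odd natural number `k`, the measurement distribution
`|ψ_t(x)|²` is exactly uniform: every vertex has probability `2^{-n}`. -/
theorem hypercube_walk_exact_uniform (n : ℕ) (hn : 1 ≤ n) (k : ℕ) (hk : Odd k)
    (t : ℝ) (ht : t = k * Real.pi * n / 4)
    (H : Matrix (Fin n → ZMod 2) (Fin n → ZMod 2) ℂ)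
    (hH : ∀ x y, H x y =
      if (Finset.univ.filter fun i => x i ≠ y i).card = 1 then (1 / n : ℂ) else 0)
    (ψ : (Fin n → ZMod 2) → ℂ)
    (hψ : ψ = (NormedSpace.exp ((Complex.I * t) • H)).mulVec
      (fun y => if y = 0 then 1 else 0)) :
    ∀ x : Fin n → ZMod 2, ‖ψ x‖ ^ 2 = 1 / 2 ^ n := by
  intro x
  set θ : ℝ := k * Real.pi / 4 with hθ_def
  have hH_eq : H = (1 / n : ℂ) • adjacency n := by
    ext a b
    rw [hH, Matrix.smul_apply, adjacency, of_apply, smul_ite, smul_eq_mul, mul_one, smul_zero]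
    rfl
  have hexponent : (Complex.I * t) • H = ((θ : ℂ) * Complex.I) • adjacency n := by
    have hn0 : (n : ℂ) ≠ 0 := by exact_mod_cast (by omega : n ≠ 0)
    rw [hH_eq, smul_smul, ht, hθ_def]
    congr 1
    push_cast
    field_simp
  have hψx : ψ x = ∏ i, if x i = 0 then (Real.cos θ : ℂ) else Real.sin θ * Complex.I := by
    rw [hψ, hexponent, mulVec, dotProduct]
    simp [exp_smul_adjacency_apply, cosh_mul_I, sinh_mul_I]
  calc ‖ψ x‖ ^ 2 = ∏ i, ‖if x i = 0 then (Real.cos θ : ℂ) else Real.sin θ * Complex.I‖ ^ 2 := by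
        rw [hψx, norm_prod, prod_pow]
    _ = ∏ _i : Fin n, (1 / 2 : ℝ) := prod_congr rfl fun i _ => by
        split_ifs
        · rw [norm_real, Real.norm_eq_abs, sq_abs, cos_sq_odd_mul_pi_div_four hk]
        · rw [norm_mul, norm_I, mul_one, norm_real, Real.norm_eq_abs, sq_abs,
            sin_sq_odd_mul_pi_div_four hk]
    _ = 1 / 2 ^ n := by simp
end

section
/- For the continuous-time quantum walk on the n-cube, the Fourier transform of the probability distribution at time t satisfies P̃_t(k) = cos^{|k|}(2t/n), where |k| is the Hamming weight of the frequency vector k. -/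
/-!
The distribution `P_t` is a product measure on `𝔽₂ⁿ`: each coordinate is `1` with probability
`sin²(t/n)` and `0` with probability `cos²(t/n)`. The Fourier transform of a product measure
is the product of the one-coordinate transforms, which equal `cos² + sin² = 1` at frequency `0`
and `cos² - sin² = cos(2t/n)` at frequency `1`.
-/

open Finset

theorem Fintype.prod_ite_eq_pow_mul_pow {ι M : Type*} [Fintype ι] [CommMonoid M]
    (p : ι → Prop) [DecidablePred p] (a b : M) :
    ∏ i, (if p i then a else b) = a ^ #{i | p i} * b ^ (Fintype.card ι - #{i | p i}) := by
  classical
  rw [prod_ite, prod_const, prod_const, filter_not, card_sdiff_of_subset (filter_subset _ _),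
    card_univ]

theorem Complex.norm_ofReal_pow_mul_I_mul_ofReal_pow_sq (a b : ℝ) (m j : ℕ) :
    ‖(a : ℂ) ^ m * (I * b) ^ j‖ ^ 2 = (a ^ 2) ^ m * (b ^ 2) ^ j := by
  rw [norm_mul, norm_pow, norm_pow, norm_mul, norm_I, one_mul, norm_real, norm_real,
    Real.norm_eq_abs, Real.norm_eq_abs, mul_pow, ← pow_mul, ← pow_mul, mul_comm m, mul_comm j,
    pow_mul, pow_mul, sq_abs, sq_abs]

theorem ZMod.sum_univ_two {M : Type*} [AddCommMonoid M] (f : ZMod 2 → M) :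
    ∑ a, f a = f 0 + f 1 :=
  Fin.sum_univ_two f

theorem ZMod.sum_neg_one_pow_card_mul_prod {ι R : Type*} [Fintype ι] [DecidableEq ι] [CommRing R]
    (k : ι → ZMod 2) (g : ZMod 2 → R) :
    ∑ x : ι → ZMod 2, (-1 : R) ^ #{i | k i = 1 ∧ x i = 1} * ∏ i, g (x i) =
      ∏ i, if k i = 1 then g 0 - g 1 else g 0 + g 1 := by
  have hsign (x : ι → ZMod 2) : (-1 : R) ^ #{i | k i = 1 ∧ x i = 1} =
      ∏ i, if k i = 1 ∧ x i = 1 then -1 else 1 := by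
    rw [Fintype.prod_ite_eq_pow_mul_pow, one_pow, mul_one]
  simp_rw [hsign, ← prod_mul_distrib]
  rw [← Fintype.prod_sum fun i a => (if k i = 1 ∧ a = 1 then -1 else 1) * g a]
  refine prod_congr rfl fun i _ => ?_
  rw [ZMod.sum_univ_two]
  by_cases hk : k i = 1 <;> simp [hk, sub_eq_add_neg]

theorem hypercube_walk_fourier_prob_general (n : ℕ) (t : ℝ)
    (P : (Fin n → ZMod 2) → ℝ)
    (hP : ∀ x, P x =
      ‖(Real.cos (t / n) : ℂ) ^ (n - (Finset.univ.filter fun i => x i = 1).card) *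
        (Complex.I * Real.sin (t / n)) ^ (Finset.univ.filter fun i => x i = 1).card‖ ^ 2)
    (k : Fin n → ZMod 2) :
    ∑ x : Fin n → ZMod 2,
        (-1 : ℝ) ^ (Finset.univ.filter fun i => k i = 1 ∧ x i = 1).card * P x =
      Real.cos (2 * t / n) ^ (Finset.univ.filter fun i => k i = 1).card := by
  set g : ZMod 2 → ℝ := fun a => if a = 1 then Real.sin (t / n) ^ 2 else Real.cos (t / n) ^ 2
  have hP_prod (x : Fin n → ZMod 2) : P x = ∏ i, g (x i) := by
    rw [hP, Complex.norm_ofReal_pow_mul_I_mul_ofReal_pow_sq, Fintype.prod_ite_eq_pow_mul_pow,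
      Fintype.card_fin, mul_comm]
  have hg_sub : g 0 - g 1 = Real.cos (2 * t / n) := by
    simp only [g, if_neg zero_ne_one, if_pos rfl, mul_div_assoc, Real.cos_two_mul']
  have hg_add : g 0 + g 1 = 1 := by
    simp only [g, if_neg zero_ne_one, if_pos rfl, Real.cos_sq_add_sin_sq]
  simp_rw [hP_prod, ZMod.sum_neg_one_pow_card_mul_prod, hg_sub, hg_add,
    Fintype.prod_ite_eq_pow_mul_pow, one_pow, mul_one]

/-- For the continuous-time quantum walk on the `n`-cube, the Fourier transform of the
probability distribution at time `t` is `P̃_t(k) = cos^{|k|}(2t/n)`, where `|k|` is the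
Hamming weight of the frequency vector `k`. -/
theorem hypercube_walk_fourier_prob (n : ℕ) (hn : 1 ≤ n) (t : ℝ)
    (P : (Fin n → ZMod 2) → ℝ)
    (hP : ∀ x, P x =
      ‖(Real.cos (t / n) : ℂ) ^ (n - (Finset.univ.filter fun i => x i = 1).card) *
        (Complex.I * Real.sin (t / n)) ^ (Finset.univ.filter fun i => x i = 1).card‖ ^ 2)
    (k : Fin n → ZMod 2) :
    ∑ x : Fin n → ZMod 2,
        (-1 : ℝ) ^ (Finset.univ.filter fun i => k i = 1 ∧ x i = 1).card * P x =
      Real.cos (2 * t / n) ^ (Finset.univ.filter fun i => k i = 1).card :=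
  hypercube_walk_fourier_prob_general n t P hP k
end
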